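/- (Theorem 5, limiting expected number of non-empty columns) Fix an integer n ≥ 1. Suppose that for each k ∈ {1,…,n} a constant C_k (not depending on α) satisfies lim_{p→∞} ((α+p)/α) · ∫_ℝ Φ(x)^k · τ_p⁻¹ φ((x − μ_p)/τ_p) dx = C_k for all α > 0. Then the expected number of non-empty columns E(p*) = p · (1 − ∫_ℝ (1 − Φ(x))^n · τ_p⁻¹ φ((x − μ_p)/τ_p) dx) satisfies lim_{p→∞} E(p*) = α · Σ_{k=1}^n (−1)^{k+1} C(n,k) C_k; in particular the limit is finite and proportional to α. -/

import Mathlib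

open MeasureTheory Real Filter

noncomputable def stdNormalPDF (x : ℝ) : ℝ :=
  (Real.sqrt (2 * Real.pi))⁻¹ * Real.exp (-x ^ 2 / 2)

noncomputable def stdNormalCDF (x : ℝ) : ℝ :=
  ∫ t in Set.Iio x, stdNormalPDF t

noncomputable def tauP (p : ℕ) : ℝ := Real.sqrt (2 * Real.log p)

noncomputable def mvpDens (μ : ℕ → ℝ) (p : ℕ) (x : ℝ) : ℝ :=
  (tauP p)⁻¹ * stdNormalPDF ((x - μ p) / tauP p)

/-! Expanding `(1 - Φ)^n` binomially turns `p (1 - E(1 - Φ(β))^n)` into an alternating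
combination of the moments `p E Φ(β)^k`, and the hypothesis says `p E Φ(β)^k → α C_k`
because `p / (α + p) → 1`. -/

theorem one_sub_one_sub_pow {R : Type*} [CommRing R] (y : R) (n : ℕ) :
    1 - (1 - y) ^ n = ∑ k ∈ Finset.Icc 1 n, (-1) ^ (k + 1) * (n.choose k : R) * y ^ k := by
  rw [show (1 : R) - y = -y + 1 by ring, add_pow, Finset.sum_range_succ',
    ← Finset.Ico_add_one_right_eq_Icc, Finset.sum_Ico_eq_sum_range]
  simp only [one_pow, mul_one, pow_zero, Nat.choose_zero_right, Nat.cast_one]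
  rw [sub_add_cancel_right, ← Finset.sum_neg_distrib]
  exact Finset.sum_congr rfl fun k _ => by rw [add_comm 1 k, neg_pow]; ring

theorem one_sub_integral_one_sub_pow_mul {α : Type*} [MeasurableSpace α] {μ : Measure α}
    {f F : α → ℝ} (hF : ∀ k, Integrable (fun x => F x ^ k * f x) μ) (hf : ∫ x, f x ∂μ = 1)
    (n : ℕ) :
    1 - ∫ x, (1 - F x) ^ n * f x ∂μ =
      ∑ k ∈ Finset.Icc 1 n, (-1) ^ (k + 1) * (n.choose k : ℝ) * ∫ x, F x ^ k * f x ∂μ := by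
  have hpt : ∀ x, (1 - F x) ^ n * f x = f x -
      ∑ k ∈ Finset.Icc 1 n, (-1) ^ (k + 1) * (n.choose k : ℝ) * (F x ^ k * f x) := by
    intro x
    rw [← sub_sub_cancel 1 ((1 - F x) ^ n), one_sub_one_sub_pow, sub_mul, Finset.sum_mul]
    simp only [one_mul, mul_assoc]
  have hf_int : Integrable f μ := by simpa using hF 0
  simp_rw [hpt]
  rw [integral_sub hf_int (integrable_finsetSum _ fun k _ => (hF k).const_mul _),
    integral_finsetSum _ fun k _ => (hF k).const_mul _, hf, sub_sub_cancel]
  simp only [integral_const_mul]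

theorem tendsto_natCast_mul_of_tendsto_add_div_mul {α c : ℝ} (hα : α ≠ 0) {a : ℕ → ℝ}
    (h : Tendsto (fun p : ℕ => (α + p) / α * a p) atTop (nhds c)) :
    Tendsto (fun p : ℕ => (p : ℝ) * a p) atTop (nhds (α * c)) := by
  have hlim := ((tendsto_natCast_div_add_atTop α).mul_const α).mul h
  rw [one_mul] at hlim
  refine hlim.congr' ?_
  filter_upwards [eventually_gt_atTop ⌈|α|⌉₊] with p hp
  have hp' : (p : ℝ) + α ≠ 0 := by
    have := (Nat.lt_of_ceil_lt hp).trans_le' (neg_le_abs α)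
    linarith
  field_simp
  ring

theorem stdNormalPDF_eq_gaussianPDFReal :
    stdNormalPDF = ProbabilityTheory.gaussianPDFReal 0 1 := by
  ext x
  simp [stdNormalPDF, ProbabilityTheory.gaussianPDFReal]

theorem stdNormalPDF_nonneg (x : ℝ) : 0 ≤ stdNormalPDF x := by
  unfold stdNormalPDF; positivity

theorem integrable_stdNormalPDF : Integrable stdNormalPDF := by
  simpa only [stdNormalPDF_eq_gaussianPDFReal] using
    ProbabilityTheory.integrable_gaussianPDFReal 0 1

theorem integral_stdNormalPDF : ∫ x, stdNormalPDF x = 1 := by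
  simpa only [stdNormalPDF_eq_gaussianPDFReal] using
    ProbabilityTheory.integral_gaussianPDFReal_eq_one 0 one_ne_zero

theorem stdNormalCDF_nonneg (x : ℝ) : 0 ≤ stdNormalCDF x :=
  integral_nonneg stdNormalPDF_nonneg

theorem stdNormalCDF_le_one (x : ℝ) : stdNormalCDF x ≤ 1 :=
  integral_stdNormalPDF ▸
    setIntegral_le_integral integrable_stdNormalPDF (Eventually.of_forall stdNormalPDF_nonneg)

theorem monotone_stdNormalCDF : Monotone stdNormalCDF := fun _ _ hab =>
  setIntegral_mono_set integrable_stdNormalPDF.integrableOn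
    (Eventually.of_forall stdNormalPDF_nonneg) (Set.Iio_subset_Iio hab).eventuallyLE

section MvpDens

variable (μ : ℕ → ℝ) {p : ℕ}

theorem tauP_pos (hp : 2 ≤ p) : 0 < tauP p := by
  have : (1 : ℝ) < p := by exact_mod_cast hp
  exact Real.sqrt_pos.2 (by positivity [Real.log_pos this])

theorem integrable_mvpDens (hp : 2 ≤ p) : Integrable (mvpDens μ p) :=
  ((integrable_stdNormalPDF.comp_div (tauP_pos hp).ne').comp_sub_right (μ p)).const_mul _

theorem integral_mvpDens (hp : 2 ≤ p) : ∫ x, mvpDens μ p x = 1 := by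
  unfold mvpDens
  rw [integral_const_mul, integral_sub_right_eq_self (fun x => stdNormalPDF (x / tauP p)),
    Measure.integral_comp_div stdNormalPDF, integral_stdNormalPDF, abs_of_pos (tauP_pos hp),
    smul_eq_mul, mul_one, inv_mul_cancel₀ (tauP_pos hp).ne']

theorem integrable_stdNormalCDF_pow_mul_mvpDens (hp : 2 ≤ p) (k : ℕ) :
    Integrable (fun x => stdNormalCDF x ^ k * mvpDens μ p x) := by
  refine (integrable_mvpDens μ hp).bdd_mul (c := 1)
    (monotone_stdNormalCDF.measurable.pow_const k).aestronglyMeasurable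
    (Eventually.of_forall fun x => ?_)
  rw [Real.norm_eq_abs, abs_of_nonneg (pow_nonneg (stdNormalCDF_nonneg x) k)]
  exact pow_le_one₀ (stdNormalCDF_nonneg x) (stdNormalCDF_le_one x)

end MvpDens

theorem mvpIBP_nonempty_columns_general (n : ℕ) (C : ℕ → ℝ)
    (hC : ∀ α : ℝ, 0 < α → ∀ μ : ℕ → ℝ,
      (∀ p : ℕ, 2 ≤ p →
        stdNormalCDF (μ p / Real.sqrt (1 + tauP p ^ 2)) = α / (α + p)) →
      ∀ k ∈ Finset.Icc 1 n,
        Filter.Tendsto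
          (fun p : ℕ => ((α + p) / α) * ∫ x : ℝ, stdNormalCDF x ^ k * mvpDens μ p x)
          Filter.atTop (nhds (C k))) :
    ∀ α : ℝ, 0 < α → ∀ μ : ℕ → ℝ,
      (∀ p : ℕ, 2 ≤ p →
        stdNormalCDF (μ p / Real.sqrt (1 + tauP p ^ 2)) = α / (α + p)) →
      Filter.Tendsto
        (fun p : ℕ => (p : ℝ) * (1 - ∫ x : ℝ, (1 - stdNormalCDF x) ^ n * mvpDens μ p x))
        Filter.atTop
        (nhds (α * ∑ k ∈ Finset.Icc 1 n, (-1 : ℝ) ^ (k + 1) * (n.choose k : ℝ) * C k)) := by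
  intro α hα μ hμ
  have hmoment : ∀ k ∈ Finset.Icc 1 n, Tendsto
      (fun p : ℕ => (-1 : ℝ) ^ (k + 1) * (n.choose k : ℝ) *
        ((p : ℝ) * ∫ x, stdNormalCDF x ^ k * mvpDens μ p x))
      atTop (nhds (α * ((-1 : ℝ) ^ (k + 1) * (n.choose k : ℝ) * C k))) := fun k hk => by
    simpa only [mul_left_comm α] using
      (tendsto_natCast_mul_of_tendsto_add_div_mul hα.ne' (hC α hα μ hμ k hk)).const_mul
        ((-1 : ℝ) ^ (k + 1) * (n.choose k : ℝ))
  rw [Finset.mul_sum]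
  refine (tendsto_finsetSum _ hmoment).congr' ?_
  filter_upwards [eventually_ge_atTop 2] with p hp
  rw [one_sub_integral_one_sub_pow_mul (integrable_stdNormalCDF_pow_mul_mvpDens μ hp)
    (integral_mvpDens μ hp), Finset.mul_sum]
  exact Finset.sum_congr rfl fun k _ => by ring

/-- Theorem 5 (limiting expected number of non-empty columns): fix `n ≥ 1` and suppose
constants `C_k` (not depending on `α`) satisfy, for all `α > 0` and `k ∈ {1,…,n}`,
`lim_{p→∞} ((α+p)/α) ∫ Φ(x)^k τ_p⁻¹φ((x-μ_p)/τ_p) dx = C_k`. Then for every `α > 0`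
the expected number of non-empty columns
`E(p*) = p(1 - ∫ (1-Φ(x))^n τ_p⁻¹φ((x-μ_p)/τ_p) dx)` satisfies
`lim_{p→∞} E(p*) = α Σ_{k=1}^n (-1)^{k+1} C(n,k) C_k`. -/
theorem mvpIBP_nonempty_columns (n : ℕ) (hn : 1 ≤ n) (C : ℕ → ℝ)
    (hC : ∀ α : ℝ, 0 < α → ∀ μ : ℕ → ℝ,
      (∀ p : ℕ, 2 ≤ p →
        stdNormalCDF (μ p / Real.sqrt (1 + tauP p ^ 2)) = α / (α + p)) →
      ∀ k ∈ Finset.Icc 1 n,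
        Filter.Tendsto
          (fun p : ℕ => ((α + p) / α) * ∫ x : ℝ, stdNormalCDF x ^ k * mvpDens μ p x)
          Filter.atTop (nhds (C k))) :
    ∀ α : ℝ, 0 < α → ∀ μ : ℕ → ℝ,
      (∀ p : ℕ, 2 ≤ p →
        stdNormalCDF (μ p / Real.sqrt (1 + tauP p ^ 2)) = α / (α + p)) →
      Filter.Tendsto
        (fun p : ℕ => (p : ℝ) * (1 - ∫ x : ℝ, (1 - stdNormalCDF x) ^ n * mvpDens μ p x))
        Filter.atTop
        (nhds (α * ∑ k ∈ Finset.Icc 1 n, (-1 : ℝ) ^ (k + 1) * (n.choose k : ℝ) * C k)) :=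
  mvpIBP_nonempty_columns_general n C hC
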